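/- Suppose the divisible P-category F fulfills the Alperin condition. Then for every proper subgroup R of P and every ψ ∈ F(P,R) there exist ℓ ∈ ℕ, subgroups U_0, …, U_ℓ of P, each of which is either F-essential or equal to P, and morphisms σ_i ∈ F(U_i) and ν_i ∈ F(U_i,R) for 0 ≤ i ≤ ℓ, such that ι_R^P = ι_{U_0}^P∘ν_0, ι_{U_{i−1}}^P∘σ_{i−1}∘ν_{i−1} = ι_{U_i}^P∘ν_i for all 1 ≤ i ≤ ℓ, and ι_{U_ℓ}^P∘σ_ℓ∘ν_ℓ = ψ (equalities of group homomorphisms R → P). -/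

import Mathlib

/-!
Call `χ, χ' ∈ F(P,R)` fused if they are joined by a chain as in the theorem; for finite `P`
every `F`-automorphism is invertible in `F`, so this is an equivalence relation, and it is
compatible with precomposition. Let `f` be the indicator of the class of `ι_R^P`, extended
linearly to `ℤF(P,R)`. By downward induction on `|R|`, every `φ ∈ F(P,T)` with `T = P` or
`|T| > |R|` is fused with `ι_T^P` (for `T = P` by a single link), so
`f(φ ∘ β) = f(ι_T^P ∘ β)` and `f` kills `r_F(R)`. Now if `R` is `F`-essential, the Alperin
condition gives `σ ∈ F(R)` with `ψ ≡ ι_R^P ∘ σ` modulo `r_F(R)`, and `ι_R^P ∘ σ` is one link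
away from `ι_R^P`; otherwise `ι_R^P - ψ ∈ w_F(R) = r_F(R)`. Either way `f(ψ) = f(ι_R^P) = 1`.
-/

namespace Puig

variable {G : Type*} [Group G]

/-- The conjugation morphism `x ↦ u x u⁻¹` from `R` to `Q`. -/
def conjMap {Q R : Subgroup G} (u : G) (h : ∀ x ∈ R, u * x * u⁻¹ ∈ Q) : ↥R →* ↥Q where
  toFun x := ⟨u * x * u⁻¹, h x x.2⟩
  map_one' := by ext; simp
  map_mul' x y := by ext; simp

/-- The data of a `P`-category: a set of morphisms for each pair of subgroups. -/
structure PCat (G : Type*) [Group G] where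
  Hom : ∀ _Q _R : Subgroup G, Set (↥_R →* ↥_Q)

/-- `F` is a divisible `P`-category. -/
structure PCat.IsDivisible (F : PCat G) : Prop where
  inj : ∀ ⦃Q R : Subgroup G⦄ ⦃φ : ↥R →* ↥Q⦄, φ ∈ F.Hom Q R → Function.Injective φ
  conj_mem : ∀ ⦃Q R : Subgroup G⦄ (u : G) (h : ∀ x ∈ R, u * x * u⁻¹ ∈ Q),
    conjMap u h ∈ F.Hom Q R
  comp_mem : ∀ ⦃Q R T : Subgroup G⦄ ⦃φ : ↥R →* ↥Q⦄ ⦃ψ : ↥T →* ↥R⦄,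
    φ ∈ F.Hom Q R → ψ ∈ F.Hom R T → φ.comp ψ ∈ F.Hom Q T
  div : ∀ ⦃Q R T : Subgroup G⦄ ⦃φ : ↥R →* ↥Q⦄ (ψ : ↥T →* ↥R), φ ∈ F.Hom Q R →
    (φ.comp ψ ∈ F.Hom Q T ↔ ψ ∈ F.Hom R T)

/-- The image `φ(Q) ≤ G` of a morphism `φ : Q → R` between subgroups of `G`. -/
def img {Q R : Subgroup G} (φ : ↥Q →* ↥R) : Subgroup G := φ.range.map R.subtype

/-- The corestriction `Q → φ(Q)` of a morphism `φ`. -/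
def toImg {Q R : Subgroup G} (φ : ↥Q →* ↥R) : ↥Q →* ↥(img φ) where
  toFun x := ⟨(φ x : G), Subgroup.mem_map_of_mem R.subtype ⟨x, rfl⟩⟩
  map_one' := by ext; simp
  map_mul' x y := by ext; simp

/-- Restriction of a morphism along an inclusion of subgroups. -/
def restrHom {A B C : Subgroup G} (ψ : ↥A →* ↥C) (h : B ≤ A) : ↥B →* ↥C :=
  ψ.comp (Subgroup.inclusion h)

/-- The inclusion morphism `ι_A^P : A → P`. -/
def inclP (A : Subgroup G) : ↥A →* ↥(⊤ : Subgroup G) := Subgroup.inclusion le_top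

/-- The automorphism of `Q` induced by conjugation by `u ∈ N_G(Q)`. -/
def conjAut (Q : Subgroup G) (u : ↥(Subgroup.normalizer (Q : Set G))) : MulAut ↥Q where
  toFun x := ⟨(u : G) * x * (u : G)⁻¹, (Subgroup.mem_normalizer_iff.mp u.2 x).mp x.2⟩
  invFun x := ⟨(u : G)⁻¹ * x * (u : G),
    (Subgroup.mem_normalizer_iff.mp u.2 ((u : G)⁻¹ * x * (u : G))).mpr
      (by simpa [mul_assoc] using x.2)⟩
  left_inv x := by ext; simp [mul_assoc]
  right_inv x := by ext; simp [mul_assoc]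
  map_mul' x y := by ext; simp

/-- The homomorphism `N_G(Q) → Aut(Q)` given by conjugation. -/
def conjHomN (Q : Subgroup G) : ↥(Subgroup.normalizer (Q : Set G)) →* MulAut ↥Q where
  toFun := conjAut Q
  map_one' := by ext x; simp [conjAut]
  map_mul' u v := by ext x; simp [conjAut, mul_assoc]

/-- `F_R(Q)`: the group of automorphisms of `Q` induced by conjugation by elements of `R`. -/
def conjF (R Q : Subgroup G) : Subgroup (MulAut ↥Q) :=
  (R.subgroupOf (Subgroup.normalizer (Q : Set G))).map (conjHomN Q)

/-- `F(Q)`: the group of `F`-automorphisms of `Q`. -/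
def FAut (F : PCat G) (Q : Subgroup G) : Subgroup (MulAut ↥Q) :=
  Subgroup.closure {α : MulAut ↥Q | α.toMonoidHom ∈ F.Hom Q Q}

/-- `O_p(G)`: the largest normal `p`-subgroup of `G`. -/
def pCore (p : ℕ) (G : Type*) [Group G] : Subgroup G :=
  sSup {H : Subgroup G | H.Normal ∧ IsPGroup p ↥H}

/-- `N_P^K(Q)`. -/
def NPK (Q : Subgroup G) (K : Subgroup (MulAut ↥Q)) : Subgroup G :=
  (K.comap (conjHomN Q)).map (Subgroup.normalizer (Q : Set G)).subtype

/-- `^φK`: the image of `K ≤ Aut Q` in `Aut (φ(Q))` under the isomorphism induced by `φ`. -/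
def pushK {Q R : Subgroup G} (φ : ↥Q →* ↥R) (K : Subgroup (MulAut ↥Q)) :
    Subgroup (MulAut ↥(img φ)) :=
  Subgroup.closure {β | ∃ α ∈ K, ∀ x : ↥Q, β (toImg φ x) = toImg φ (α x)}

/-- `φ*K'`: the pull-back of `K' ≤ Aut (φ(Q))` to `Aut Q` under the isomorphism induced by `φ`. -/
def pullK {Q R : Subgroup G} (φ : ↥Q →* ↥R) (K' : Subgroup (MulAut ↥(img φ))) :
    Subgroup (MulAut ↥Q) :=
  Subgroup.closure {α | ∃ β ∈ K', ∀ x : ↥Q, toImg φ (α x) = β (toImg φ x)}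

/-- `Q` is fully `K`-normalized in `F`. -/
def FullyKNormalized (F : PCat G) (Q : Subgroup G) (K : Subgroup (MulAut ↥Q)) : Prop :=
  ∀ ψ ∈ F.Hom ⊤ (Q ⊔ NPK Q K),
    img (restrHom ψ le_sup_right) =
      NPK (img (restrHom ψ le_sup_left)) (pushK (restrHom ψ le_sup_left) K)

/-- The triple `(Q, K, φ)` is extensile in `F`. -/
def Extensile (F : PCat G) (Q : Subgroup G) (K : Subgroup (MulAut ↥Q))
    (φ : ↥Q →* ↥(⊤ : Subgroup G)) : Prop :=
  ∃ ψ ∈ F.Hom ⊤ (Q ⊔ NPK Q K), ∃ χ : MulAut ↥Q, χ ∈ K ∧ χ.toMonoidHom ∈ F.Hom Q Q ∧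
    ∀ u : ↥Q, restrHom ψ le_sup_left u = φ (χ u)

/-- The Sylow condition: `F_P(P)` is a Sylow `p`-subgroup of `F(P)`. -/
def SylowCond (p : ℕ) (F : PCat G) : Prop :=
  ∃ S : Sylow p ↥(FAut F (⊤ : Subgroup G)),
    (S : Subgroup ↥(FAut F (⊤ : Subgroup G))) =
      (conjF (⊤ : Subgroup G) (⊤ : Subgroup G)).subgroupOf (FAut F (⊤ : Subgroup G))

/-- The extension condition for a Frobenius `P`-category. -/
def ExtensionCond (F : PCat G) : Prop :=
  ∀ (Q : Subgroup G) (K : Subgroup (MulAut ↥Q)) (φ : ↥Q →* ↥(⊤ : Subgroup G)),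
    φ ∈ F.Hom ⊤ Q → FullyKNormalized F (img φ) (pushK φ K) → Extensile F Q K φ

/-- `F` is a Frobenius `P`-category. -/
def IsFrobenius (p : ℕ) (F : PCat G) : Prop :=
  F.IsDivisible ∧ SylowCond p F ∧ ExtensionCond F

/-- The free ℤ-module on all morphisms from `R` to `Q`. -/
abbrev Zmod (Q R : Subgroup G) : Type _ := (↥R →* ↥Q) →₀ ℤ

/-- Bilinear composition on the free ℤ-modules of morphisms. -/
noncomputable def dcomp {Q R T : Subgroup G} (a : Zmod Q R) (b : Zmod R T) : Zmod Q T :=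
  a.sum fun φ m => b.sum fun ψ n => Finsupp.single (φ.comp ψ) (m * n)

/-- `ℤF(Q,R)`: the free ℤ-module with basis `F(Q,R)`. -/
noncomputable def ZF (F : PCat G) (Q R : Subgroup G) : Submodule ℤ (Zmod Q R) :=
  Finsupp.supported ℤ ℤ (F.Hom Q R)

/-- `w_F(Q)`: the kernel of the augmentation `ℤF(P,Q) → ℤ`. -/
noncomputable def wF (F : PCat G) (Q : Subgroup G) : Submodule ℤ (Zmod (⊤ : Subgroup G) Q) :=
  ZF F ⊤ Q ⊓ LinearMap.ker (Finsupp.linearCombination ℤ fun _ => (1 : ℤ))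

/-- `r_F(Q) = w_F(P)∘ℤF(P,Q) + Σ_{|R|>|Q|} w_F(R)∘ℤF(R,Q)`. -/
noncomputable def rF (F : PCat G) (Q : Subgroup G) : Submodule ℤ (Zmod (⊤ : Subgroup G) Q) :=
  Submodule.span ℤ {x | ∃ R : Subgroup G, (R = ⊤ ∨ Nat.card ↥Q < Nat.card ↥R) ∧
    ∃ a ∈ wF F R, ∃ b ∈ ZF F R Q, x = dcomp a b}

/-- `Q` is `F`-essential. -/
def IsEssential (F : PCat G) (Q : Subgroup G) : Prop := rF F Q ≠ wF F Q

/-- `Q` is `F`-selfcentralizing. -/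
def SelfCentralizing (F : PCat G) (Q : Subgroup G) : Prop :=
  ∀ φ ∈ F.Hom (⊤ : Subgroup G) Q,
    Subgroup.centralizer (img φ : Set G) = (Subgroup.center ↥(img φ)).map (img φ).subtype

/-- `Q` is `F`-radical. -/
def Radical (p : ℕ) (F : PCat G) (Q : Subgroup G) : Prop :=
  SelfCentralizing F Q ∧ (pCore p ↥(FAut F Q)).map (FAut F Q).subtype = conjF Q Q

/-- `Q` is `F`-intersected. -/
def Intersected (F : PCat G) (Q : Subgroup G) : Prop :=
  SelfCentralizing F Q ∧
    conjF Q Q = ⨅ φ : ↥(F.Hom (⊤ : Subgroup G) Q), pullK φ.1 (conjF ⊤ (img φ.1))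

/-- The Alperin condition on `F`. -/
def AlperinCond (p : ℕ) (F : PCat G) : Prop :=
  ∀ Q : Subgroup G, IsEssential F Q → Radical p F Q ∧
    ∀ φ ∈ F.Hom (⊤ : Subgroup G) Q, ∀ φ' ∈ F.Hom (⊤ : Subgroup G) Q,
      ∃ σ ∈ F.Hom Q Q,
        Finsupp.single φ' (1 : ℤ) - Finsupp.single (φ.comp σ) 1 ∈ rF F Q

/-- The subgroup of `G` corresponding to a subgroup of a subgroup `N ≤ G`. -/
def liftSub {N : Subgroup G} (A : Subgroup ↥N) : Subgroup G := A.map N.subtype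

/-- The category `N_F^K(Q)` over the group `N_P^K(Q)`. -/
def NFK (F : PCat G) (Q : Subgroup G) (K : Subgroup (MulAut ↥Q)) : PCat ↥(NPK Q K) where
  Hom A B := {φ : ↥B →* ↥A | ∃ ψ ∈ F.Hom (Q ⊔ liftSub A) (Q ⊔ liftSub B), ∃ χ ∈ K,
    (∀ (x : G) (hxQ : x ∈ Q) (hx : x ∈ Q ⊔ liftSub B),
      ((ψ ⟨x, hx⟩ : ↥(Q ⊔ liftSub A)) : G) = ((χ ⟨x, hxQ⟩ : ↥Q) : G)) ∧
    (∀ (y : ↥B) (hy : ((y : ↥(NPK Q K)) : G) ∈ Q ⊔ liftSub B),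
      ((ψ ⟨((y : ↥(NPK Q K)) : G), hy⟩ : ↥(Q ⊔ liftSub A)) : G) =
        (((φ y : ↥A) : ↥(NPK Q K)) : G))}

/-- A generator family for `w_F`. -/
def GenFamily (F : PCat G) (S : ∀ Q : Subgroup G, Set (Zmod (⊤ : Subgroup G) Q)) : Prop :=
  (∀ Q : Subgroup G, Q ≠ ⊤ → S Q ⊆ (wF F Q : Set (Zmod (⊤ : Subgroup G) Q))) ∧
  ∀ Q : Subgroup G, Q ≠ ⊤ →
    wF F Q = Submodule.span ℤ {x | ∃ R : Subgroup G, R ≠ ⊤ ∧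
      ∃ a ∈ S R, ∃ φ ∈ F.Hom R Q, x = dcomp a (Finsupp.single φ (1 : ℤ))}

/-- `F^𝔛` is a partial Frobenius `P`-category. -/
def PartialFrobenius (p : ℕ) (F : PCat G) (X : Set (Subgroup G)) : Prop :=
  SylowCond p F ∧ ∀ Q ∈ X, ∀ (K : Subgroup (MulAut ↥Q)) (φ : ↥Q →* ↥(⊤ : Subgroup G)),
    φ ∈ F.Hom ⊤ Q → FullyKNormalized F (img φ) (pushK φ K) → Extensile F Q K φ

/-- The closure condition on the set of subgroups `𝔛`. -/
def XClosed (F : PCat G) (X : Set (Subgroup G)) : Prop :=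
  X.Nonempty ∧ ∀ Q : Subgroup G, (∃ R ∈ X, (F.Hom Q R).Nonempty) → Q ∈ X

namespace PCat.IsDivisible

variable {F : PCat G} (hF : F.IsDivisible)
include hF

theorem inclusion_mem {A B : Subgroup G} (h : A ≤ B) : Subgroup.inclusion h ∈ F.Hom B A := by
  have hconj : ∀ x ∈ A, (1 : G) * x * 1⁻¹ ∈ B := fun x hx => by simpa using h hx
  convert hF.conj_mem 1 hconj
  ext
  simp [conjMap]

theorem id_mem (Q : Subgroup G) : MonoidHom.id ↥Q ∈ F.Hom Q Q :=
  hF.inclusion_mem le_rfl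

theorem inclP_mem (A : Subgroup G) : inclP A ∈ F.Hom ⊤ A :=
  hF.inclusion_mem le_top

/-- The inverse exists because an injective endomorphism of a finite group is bijective, and it
lies in `F` by divisibility, since `φ ∘ φ⁻¹ = id` does. -/
theorem exists_leftInverse_mem [Finite G] {Q : Subgroup G} {φ : ↥Q →* ↥Q}
    (hφ : φ ∈ F.Hom Q Q) : ∃ ρ ∈ F.Hom Q Q, ρ.comp φ = MonoidHom.id ↥Q := by
  let e : ↥Q ≃* ↥Q := MulEquiv.ofBijective φ (Finite.injective_iff_bijective.mp (hF.inj hφ))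
  refine ⟨e.symm.toMonoidHom, (hF.div _ hφ).mp ?_, ?_⟩
  · convert hF.id_mem Q
    ext x
    exact congrArg Subtype.val (e.apply_symm_apply x)
  · ext x
    exact congrArg Subtype.val (e.symm_apply_apply x)

end PCat.IsDivisible

/-- `χ` is carried to `χ'` by one link `U` of a chain as in `alperin_fusion_chain`. -/
def FusionStep (F : PCat G) (R : Subgroup G) (χ χ' : ↥R →* ↥(⊤ : Subgroup G)) : Prop :=
  ∃ U : Subgroup G, (IsEssential F U ∨ U = ⊤) ∧
    ∃ ν ∈ F.Hom U R, ∃ σ ∈ F.Hom U U,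
      (inclP U).comp ν = χ ∧ (inclP U).comp (σ.comp ν) = χ'

def FusionRel (F : PCat G) (R : Subgroup G) :
    (↥R →* ↥(⊤ : Subgroup G)) → (↥R →* ↥(⊤ : Subgroup G)) → Prop :=
  Relation.ReflTransGen (FusionStep F R)

open Classical in
noncomputable def fusionIndicator (F : PCat G) (R : Subgroup G)
    (χ : ↥R →* ↥(⊤ : Subgroup G)) : ℤ :=
  if FusionRel F R (inclP R) χ then 1 else 0

section

variable {F : PCat G} {R : Subgroup G} {χ χ' : ↥R →* ↥(⊤ : Subgroup G)}

theorem single_sub_single_mem_wF (hχ : χ ∈ F.Hom ⊤ R) (hχ' : χ' ∈ F.Hom ⊤ R) :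
    Finsupp.single χ (1 : ℤ) - Finsupp.single χ' 1 ∈ wF F R := by
  refine Submodule.mem_inf.mpr ⟨sub_mem (Finsupp.single_mem_supported ℤ 1 hχ)
    (Finsupp.single_mem_supported ℤ 1 hχ'), ?_⟩
  simp [LinearMap.mem_ker, Finsupp.linearCombination_single]

/-- On a generator `a ∘ b` of `r_F(R)`, the hypothesis lets the augmentation of
`a ∈ w_F(T)` factor out. -/
theorem linearCombination_eq_zero_of_mem_rF {f : (↥R →* ↥(⊤ : Subgroup G)) → ℤ}
    (hf : ∀ T : Subgroup G, (T = ⊤ ∨ Nat.card ↥R < Nat.card ↥T) →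
      ∀ φ ∈ F.Hom ⊤ T, ∀ β ∈ F.Hom T R, f (φ.comp β) = f ((inclP T).comp β))
    {x : Zmod (⊤ : Subgroup G) R} (hx : x ∈ rF F R) :
    Finsupp.linearCombination ℤ f x = 0 := by
  induction hx using Submodule.span_induction with
  | zero => exact map_zero _
  | add _ _ _ _ ha hb => rw [map_add, ha, hb, add_zero]
  | smul _ _ _ ha => rw [map_smul, ha, smul_zero]
  | mem x hx =>
    obtain ⟨T, hT, a, ha, b, hb, rfl⟩ := hx
    obtain ⟨haF, haug⟩ := Submodule.mem_inf.mp ha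
    have haug' : (a.sum fun _ m => m) = 0 := by
      simpa [Finsupp.linearCombination_apply] using haug
    set c := b.sum fun β n => n * f ((inclP T).comp β)
    calc Finsupp.linearCombination ℤ f (dcomp a b)
        = a.sum fun φ m => b.sum fun β n => m * n * f (φ.comp β) := by
          simp only [dcomp, map_finsuppSum, Finsupp.linearCombination_single, smul_eq_mul]
      _ = a.sum fun _ m => m * c := by
          refine Finsupp.sum_congr fun φ hφ => ?_
          rw [Finsupp.mul_sum]
          refine Finsupp.sum_congr fun β hβ => ?_
          rw [hf T hT φ ((Finsupp.mem_supported ℤ a).mp haF hφ) β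
            ((Finsupp.mem_supported ℤ b).mp hb hβ), mul_assoc]
      _ = 0 := by rw [← Finsupp.sum_mul, haug', zero_mul]

theorem eq_of_single_sub_single_mem_rF {f : (↥R →* ↥(⊤ : Subgroup G)) → ℤ}
    (hf : ∀ T : Subgroup G, (T = ⊤ ∨ Nat.card ↥R < Nat.card ↥T) →
      ∀ φ ∈ F.Hom ⊤ T, ∀ β ∈ F.Hom T R, f (φ.comp β) = f ((inclP T).comp β))
    (h : Finsupp.single χ (1 : ℤ) - Finsupp.single χ' 1 ∈ rF F R) : f χ = f χ' := by
  have h0 := linearCombination_eq_zero_of_mem_rF hf h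
  rw [map_sub, Finsupp.linearCombination_single, Finsupp.linearCombination_single] at h0
  simpa [sub_eq_zero] using h0

theorem FusionStep.symm [Finite G] (hF : F.IsDivisible) (h : FusionStep F R χ χ') :
    FusionStep F R χ' χ := by
  obtain ⟨U, hU, ν, hν, σ, hσ, rfl, rfl⟩ := h
  obtain ⟨ρ, hρ, hρσ⟩ := hF.exists_leftInverse_mem hσ
  refine ⟨U, hU, σ.comp ν, hF.comp_mem hσ hν, ρ, hρ, rfl, ?_⟩
  rw [← MonoidHom.comp_assoc _ σ ρ, hρσ, MonoidHom.id_comp]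

theorem FusionRel.symm [Finite G] (hF : F.IsDivisible) (h : FusionRel F R χ χ') :
    FusionRel F R χ' χ :=
  Relation.ReflTransGen.mono (fun _ _ hs => FusionStep.symm hF hs) _ _
    (Relation.ReflTransGen.swap _ _ h)

theorem FusionRel.comp_right (hF : F.IsDivisible) {T : Subgroup G} {β : ↥R →* ↥T}
    (hβ : β ∈ F.Hom T R) {χ χ' : ↥T →* ↥(⊤ : Subgroup G)} (h : FusionRel F T χ χ') :
    FusionRel F R (χ.comp β) (χ'.comp β) := by
  refine Relation.ReflTransGen.lift (fun χ : ↥T →* ↥(⊤ : Subgroup G) => χ.comp β) ?_ _ _ h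
  rintro _ _ ⟨U, hU, ν, hν, σ, hσ, rfl, rfl⟩
  exact ⟨U, hU, ν.comp β, hF.comp_mem hν hβ, σ, hσ, rfl, rfl⟩

theorem fusionStep_inclP_comp (hF : F.IsDivisible) (hR : IsEssential F R ∨ R = ⊤)
    {σ : ↥R →* ↥R} (hσ : σ ∈ F.Hom R R) :
    FusionStep F R (inclP R) ((inclP R).comp σ) :=
  ⟨R, hR, MonoidHom.id _, hF.id_mem R, σ, hσ, rfl, rfl⟩

theorem fusionIndicator_congr [Finite G] (hF : F.IsDivisible) (h : FusionRel F R χ χ') :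
    fusionIndicator F R χ = fusionIndicator F R χ' := by
  unfold fusionIndicator
  congr 1
  exact propext ⟨fun h' => h'.trans h, fun h' => h'.trans (h.symm hF)⟩

theorem FusionRel.of_fusionIndicator_eq (hχ : FusionRel F R (inclP R) χ)
    (h : fusionIndicator F R χ = fusionIndicator F R χ') : FusionRel F R (inclP R) χ' := by
  by_contra hχ'
  simp [fusionIndicator, hχ, hχ'] at h

theorem FusionRel.exists_chain (hF : F.IsDivisible) {ψ : ↥R →* ↥(⊤ : Subgroup G)}
    (hψ : ψ ∈ F.Hom ⊤ R) (h : FusionRel F R χ ψ) :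
    ∃ (ℓ : ℕ) (U : Fin (ℓ + 1) → Subgroup G)
      (σ : ∀ i, ↥(U i) →* ↥(U i)) (ν : ∀ i, ↥R →* ↥(U i)),
      (∀ i, IsEssential F (U i) ∨ U i = ⊤) ∧
      (∀ i, σ i ∈ F.Hom (U i) (U i)) ∧
      (∀ i, ν i ∈ F.Hom (U i) R) ∧
      (inclP (U 0)).comp (ν 0) = χ ∧
      (∀ i : Fin ℓ,
        (inclP (U i.castSucc)).comp ((σ i.castSucc).comp (ν i.castSucc)) =
          (inclP (U i.succ)).comp (ν i.succ)) ∧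
      (inclP (U (Fin.last ℓ))).comp ((σ (Fin.last ℓ)).comp (ν (Fin.last ℓ))) = ψ := by
  induction h using Relation.ReflTransGen.head_induction_on with
  | refl =>
    exact ⟨0, fun _ => ⊤, fun _ => MonoidHom.id _, fun _ => ψ, fun _ => Or.inr rfl,
      fun _ => hF.id_mem ⊤, fun _ => hψ, rfl, Fin.elim0, rfl⟩
  | head hstep _ ih =>
    obtain ⟨V, hV, μ, hμ, τ, hτ, hfirst, hnext⟩ := hstep
    obtain ⟨ℓ, U, σ, ν, hU, hσ, hν, hstart, hmid, hlast⟩ := ih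
    let U' : Fin (ℓ + 2) → Subgroup G := Fin.cons V U
    refine ⟨ℓ + 1, U', Fin.cons (α := fun i => ↥(U' i) →* ↥(U' i)) τ σ,
      Fin.cons (α := fun i => ↥R →* ↥(U' i)) μ ν, Fin.cases hV hU, Fin.cases hτ hσ,
      Fin.cases hμ hν, hfirst, Fin.cases (hnext.trans hstart.symm) hmid, hlast⟩

theorem fusionRel_inclP [Finite G] {p : ℕ} (hF : F.IsDivisible) (hA : AlperinCond p F)
    (hχ : χ ∈ F.Hom ⊤ R) : FusionRel F R (inclP R) χ := by
  induction R using (measure fun R : Subgroup G => Nat.card G - Nat.card R).wf.induction with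
  | _ R IH =>
    have hf : ∀ T : Subgroup G, (T = ⊤ ∨ Nat.card ↥R < Nat.card ↥T) →
        ∀ φ ∈ F.Hom ⊤ T, ∀ β ∈ F.Hom T R,
          fusionIndicator F R (φ.comp β) = fusionIndicator F R ((inclP T).comp β) := by
      intro T hT φ hφ β hβ
      refine fusionIndicator_congr hF (FusionRel.comp_right hF hβ (FusionRel.symm hF ?_))
      rcases hT with rfl | hT
      · exact .single (fusionStep_inclP_comp hF (Or.inr rfl) hφ)
      · have := T.card_le_card_group
        exact IH T (show Nat.card G - Nat.card T < Nat.card G - Nat.card R by omega) hφ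
    by_cases hR : IsEssential F R
    · obtain ⟨σ, hσ, hmem⟩ := (hA R hR).2 _ (hF.inclP_mem R) χ hχ
      exact FusionRel.of_fusionIndicator_eq (.single (fusionStep_inclP_comp hF (Or.inl hR) hσ))
        (eq_of_single_sub_single_mem_rF hf hmem).symm
    · rw [IsEssential, not_not] at hR
      exact FusionRel.of_fusionIndicator_eq .refl
        (eq_of_single_sub_single_mem_rF hf (hR ▸ single_sub_single_mem_wF (hF.inclP_mem R) hχ))

end

theorem alperin_fusion_chain_general
    (p : ℕ) {P : Type*} [Group P] [Finite P]
    (F : PCat P) (hF : F.IsDivisible) (hA : AlperinCond p F)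
    (R : Subgroup P)
    (ψ : ↥R →* ↥(⊤ : Subgroup P)) (hψ : ψ ∈ F.Hom ⊤ R) :
    ∃ (ℓ : ℕ) (U : Fin (ℓ + 1) → Subgroup P)
      (σ : ∀ i, ↥(U i) →* ↥(U i)) (ν : ∀ i, ↥R →* ↥(U i)),
      (∀ i, IsEssential F (U i) ∨ U i = ⊤) ∧
      (∀ i, σ i ∈ F.Hom (U i) (U i)) ∧
      (∀ i, ν i ∈ F.Hom (U i) R) ∧
      (inclP (U 0)).comp (ν 0) = inclP R ∧
      (∀ i : Fin ℓ,
        (inclP (U i.castSucc)).comp ((σ i.castSucc).comp (ν i.castSucc)) =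
          (inclP (U i.succ)).comp (ν i.succ)) ∧
      (inclP (U (Fin.last ℓ))).comp ((σ (Fin.last ℓ)).comp (ν (Fin.last ℓ))) = ψ :=
  (fusionRel_inclP hF hA hψ).exists_chain hF hψ

/-- **Alperin's Fusion Theorem in `F`** (cf. [5, Corollary 5.14]): if `F` fulfills the Alperin
condition then every morphism `ψ ∈ F(P,R)`, for `R` a proper subgroup of `P`, decomposes
through a chain of `F`-essential subgroups of `P` (or `P` itself). -/
theorem alperin_fusion_chain
    (p : ℕ) [Fact p.Prime] {P : Type*} [Group P] [Finite P] (hP : IsPGroup p P)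
    (F : PCat P) (hF : F.IsDivisible) (hA : AlperinCond p F)
    (R : Subgroup P) (hR : R ≠ ⊤)
    (ψ : ↥R →* ↥(⊤ : Subgroup P)) (hψ : ψ ∈ F.Hom ⊤ R) :
    ∃ (ℓ : ℕ) (U : Fin (ℓ + 1) → Subgroup P)
      (σ : ∀ i, ↥(U i) →* ↥(U i)) (ν : ∀ i, ↥R →* ↥(U i)),
      (∀ i, IsEssential F (U i) ∨ U i = ⊤) ∧
      (∀ i, σ i ∈ F.Hom (U i) (U i)) ∧
      (∀ i, ν i ∈ F.Hom (U i) R) ∧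
      (inclP (U 0)).comp (ν 0) = inclP R ∧
      (∀ i : Fin ℓ,
        (inclP (U i.castSucc)).comp ((σ i.castSucc).comp (ν i.castSucc)) =
          (inclP (U i.succ)).comp (ν i.succ)) ∧
      (inclP (U (Fin.last ℓ))).comp ((σ (Fin.last ℓ)).comp (ν (Fin.last ℓ))) = ψ :=
  alperin_fusion_chain_general p F hF hA R ψ hψ

end Puig
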